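/- arXiv:2109.03857 — 5 statements merged into one kernel-verified Lean document; each statement's English description precedes it below -/
import Mathlib

section
/- For any classifier C : X → Bool, the number of samples not robustly correctly classified by C is at least the cardinality of a maximum matching of the conflict graph. Equivalently, the robust (adversarial) accuracy of any classifier is at most (n − m)/n, where n is the number of samples and m the maximum matching size of the conflict graph. -/
/-! A matching edge joins two samples with different labels whose perturbation sets share a
point `z`; whatever `C z` is, one of the two samples is misclassified at `z`. So the
misclassified samples form a vertex cover of the matching, and a vertex cover contains a
distinct vertex of every edge of a matching. -/

def PairwiseVertexDisjoint {α : Type*} (M : Finset (α × α)) : Prop :=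
  ∀ e ∈ M, ∀ f ∈ M, e ≠ f → e.1 ≠ f.1 ∧ e.1 ≠ f.2 ∧ e.2 ≠ f.1 ∧ e.2 ≠ f.2

theorem PairwiseVertexDisjoint.card_le_ncard_of_cover {α : Type*} {M : Finset (α × α)}
    (hdisj : PairwiseVertexDisjoint M) {T : Set α} (hT : T.Finite)
    (hcover : ∀ e ∈ M, e.1 ∈ T ∨ e.2 ∈ T) :
    M.card ≤ T.ncard := by
  classical
  rw [← Set.ncard_coe_finset]
  refine Set.ncard_le_ncard_of_injOn (fun e => if e.1 ∈ T then e.1 else e.2) ?_ ?_ hT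
  · intro e he
    split_ifs with h
    · exact h
    · exact (hcover e he).resolve_left h
  · intro e he f hf hef
    by_contra hne
    obtain ⟨h11, h12, h21, h22⟩ := hdisj e he f hf hne
    dsimp only at hef
    split_ifs at hef <;> contradiction

section Robustness

variable {X I Y : Type*}

def RobustlyCorrect (C : X → Y) (y : I → Y) (S : I → Set X) (i : I) : Prop :=
  ∀ z ∈ S i, C z = y i

theorem not_robustlyCorrect_or_of_conflict {C : X → Y} {y : I → Y} {S : I → Set X} {i j : I}
    (hy : y i ≠ y j) (hS : (S i ∩ S j).Nonempty) :
    ¬RobustlyCorrect C y S i ∨ ¬RobustlyCorrect C y S j := by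
  obtain ⟨z, hzi, hzj⟩ := hS
  rw [← not_and_or]
  rintro ⟨hi, hj⟩
  exact hy ((hi z hzi).symm.trans (hj z hzj))

end Robustness

theorem matching_lower_bounds_robust_errors_general
    {X : Type*} {I : Type*} [Fintype I]
    (y : I → Bool) (S : I → Set X)
    (M : Finset (I × I))
    (hedge : ∀ e ∈ M, y e.1 ≠ y e.2 ∧ (S e.1 ∩ S e.2).Nonempty)
    (hdisj : ∀ e ∈ M, ∀ f ∈ M, e ≠ f →
      e.1 ≠ f.1 ∧ e.1 ≠ f.2 ∧ e.2 ≠ f.1 ∧ e.2 ≠ f.2)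
    (C : X → Bool) :
    M.card ≤ Nat.card {i : I | ¬∀ z ∈ S i, C z = y i} ∧
    (Nat.card {i : I | ∀ z ∈ S i, C z = y i} : ℚ) / (Fintype.card I) ≤
      ((Fintype.card I : ℚ) - M.card) / (Fintype.card I) := by
  set correct : Set I := {i | RobustlyCorrect C y S i}
  show M.card ≤ Nat.card ↥correctᶜ ∧ (Nat.card correct : ℚ) / _ ≤ _
  rw [Nat.card_coe_set_eq, Nat.card_coe_set_eq]
  have herrors : M.card ≤ correctᶜ.ncard :=
    PairwiseVertexDisjoint.card_le_ncard_of_cover hdisj (Set.toFinite _) fun e he =>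
      not_robustlyCorrect_or_of_conflict (hedge e he).1 (hedge e he).2
  have hsum : (correct.ncard : ℚ) + correctᶜ.ncard = Fintype.card I := by
    exact_mod_cast (Set.ncard_add_ncard_compl correct).trans Nat.card_eq_fintype_card
  refine ⟨herrors, ?_⟩
  gcongr
  have : (M.card : ℚ) ≤ correctᶜ.ncard := by exact_mod_cast herrors
  linarith

/-- For any classifier, the number of samples not robustly correctly
classified is at least the size of any matching of the conflict graph (in particular the
maximum matching); equivalently, the robust accuracy is at most `(n - m) / n`. -/
theorem matching_lower_bounds_robust_errors
    {X : Type*} {I : Type*} [Fintype I]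
    (y : I → Bool) (S : I → Set X) (hne : ∀ i, (S i).Nonempty)
    (M : Finset (I × I))
    (hedge : ∀ e ∈ M, y e.1 ≠ y e.2 ∧ (S e.1 ∩ S e.2).Nonempty)
    (hdisj : ∀ e ∈ M, ∀ f ∈ M, e ≠ f →
      e.1 ≠ f.1 ∧ e.1 ≠ f.2 ∧ e.2 ≠ f.1 ∧ e.2 ≠ f.2)
    (C : X → Bool) :
    M.card ≤ Nat.card {i : I | ¬∀ z ∈ S i, C z = y i} ∧
    (Nat.card {i : I | ∀ z ∈ S i, C z = y i} : ℚ) / (Fintype.card I) ≤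
      ((Fintype.card I : ℚ) - M.card) / (Fintype.card I) :=
  matching_lower_bounds_robust_errors_general y S M hedge hdisj C
end

section
/- There exists a classifier achieving the matching upper bound when perturbation sets are determined pointwise: if W is a minimum vertex cover of the conflict graph, then the classifier that assigns to each point z the label of some sample i ∉ W with z ∈ Sᵢ (and an arbitrary label elsewhere) is well-defined on ⋃_{i ∉ W} Sᵢ (no two samples outside W with different labels have overlapping sets) and robustly correctly classifies all samples outside W. -/
/-- If `W` is a vertex cover of the conflict graph, then (1) assigning to
each point of `⋃ i ∉ W, S i` the label of a covering sample outside `W` is well-defined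
(no two samples outside `W` with different labels overlap), and (2) there exists a
classifier robustly correct on all samples outside `W`. -/
theorem classifier_from_vertex_cover
    {X : Type*} {I : Type*} [Fintype I]
    (y : I → Bool) (S : I → Set X)
    (W : Finset I)
    (hcover : ∀ i j, i ≠ j → y i ≠ y j → (S i ∩ S j).Nonempty → i ∈ W ∨ j ∈ W) :
    (∀ i ∉ W, ∀ j ∉ W, (S i ∩ S j).Nonempty → y i = y j) ∧
    ∃ C : X → Bool, ∀ i ∉ W, ∀ z ∈ S i, C z = y i := by
  classical
  have hwd : ∀ i ∉ W, ∀ j ∉ W, (S i ∩ S j).Nonempty → y i = y j := by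
    intro i hi j hj hne
    by_contra h
    have hij : i ≠ j := by rintro rfl; exact h rfl
    rcases hcover i j hij h hne with h' | h' <;> [exact hi h'; exact hj h']
  refine ⟨hwd, fun z => if h : ∃ i, i ∉ W ∧ z ∈ S i then y h.choose else false, ?_⟩
  intro i hi z hz
  have h : ∃ j, j ∉ W ∧ z ∈ S j := ⟨i, hi, hz⟩
  simp only [dif_pos h]
  exact hwd _ h.choose_spec.1 i hi ⟨z, h.choose_spec.2, hz⟩
end

section
/- If the conflict graph has a perfect matching (i.e., maximum matching of size ⌊n/2⌋ covering all vertices for even n), then no classifier can robustly classify more than n/2 samples; in particular, when all samples' perturbation sets pairwise overlap across classes and the two classes have equal size n/2, the constant classifier predicting one class achieves this optimal robust accuracy of 1/2. -/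
/-- With `n` even, exactly `n/2` samples of each class, nonempty
perturbation sets, and cross-class perturbation sets pairwise overlapping, no classifier
robustly classifies more than `n/2` samples, and any constant classifier robustly
classifies exactly `n/2` samples, achieving the optimal robust accuracy of `1/2`. -/
theorem perfect_matching_halves_accuracy
    {X : Type*} {I : Type*} [Fintype I]
    (y : I → Bool) (S : I → Set X) (hne : ∀ i, (S i).Nonempty)
    (hov : ∀ i j, y i ≠ y j → (S i ∩ S j).Nonempty)
    (heven : Even (Fintype.card I))
    (htrue : Nat.card {i : I | y i = true} = Fintype.card I / 2)
    (hfalse : Nat.card {i : I | y i = false} = Fintype.card I / 2) :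
    (∀ C : X → Bool,
        Nat.card {i : I | ∀ z ∈ S i, C z = y i} ≤ Fintype.card I / 2) ∧
    (∀ b : Bool,
        Nat.card {i : I | ∀ z ∈ S i, (fun _ : X => b) z = y i} = Fintype.card I / 2) := by
  constructor
  · intro C
    set A : Set I := {i : I | ∀ z ∈ S i, C z = y i} with hA
    have hmono : ∀ b : Bool, A ⊆ {i : I | y i = b} →
        Nat.card A ≤ Fintype.card I / 2 := by
      intro b hsub
      have h1 : Nat.card A ≤ Nat.card {i : I | y i = b} := by
        rw [Nat.card_coe_set_eq, Nat.card_coe_set_eq]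
        exact Set.ncard_le_ncard hsub (Set.toFinite _)
      cases b
      · exact h1.trans_eq hfalse
      · exact h1.trans_eq htrue
    by_cases h : ∃ i ∈ A, y i = true
    · obtain ⟨i, hiA, hit⟩ := h
      apply hmono true
      intro j hjA
      by_contra hjf
      have hne' : y i ≠ y j := by simp [hit]; simpa using hjf
      obtain ⟨z, hzi, hzj⟩ := hov i j hne'
      have := hiA z hzi
      have := hjA z hzj
      simp_all
    · apply hmono false
      intro j hjA
      simp only [Set.mem_setOf_eq]
      by_contra hjf
      exact h ⟨j, hjA, by simpa using hjf⟩
  · intro b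
    have : {i : I | ∀ z ∈ S i, (fun _ : X => b) z = y i} = {i : I | y i = b} := by
      ext i
      simp only [Set.mem_setOf_eq]
      constructor
      · intro h
        obtain ⟨z, hz⟩ := hne i
        exact (h z hz).symm
      · intro h z _
        exact h.symm
    rw [this]
    cases b
    · exact hfalse
    · exact htrue
end

section
/- For a box S and a complete binary tree T with axis-aligned splits such that all split features along the path to the leaf t are distinct (no two ancestors of t split on the same feature), reachability of t by some point of S equals the conjunction of per-node one-sided reachability conditions: (∃ z ∈ S, T z = t) ↔ (∀ m ∈ A_l(t), x jₘ − Δˡ jₘ ≤ bₘ) ∧ (∀ m ∈ A_r(t), x jₘ + Δʳ jₘ > bₘ). -/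
/-- A complete binary decision tree of depth `d` over `ℝᵖ` with axis-aligned splits. -/
inductive BTree (p : ℕ) : ℕ → Type
  | leaf (b : Bool) : BTree p 0
  | node {d : ℕ} (j : Fin p) (th : ℝ) (l r : BTree p d) : BTree p (d + 1)

/-- The root-to-leaf path followed by `z` (`true` = go right, i.e. `z j > th`). -/
noncomputable def BTree.evalPath {p : ℕ} :
    {d : ℕ} → BTree p d → (Fin p → ℝ) → (Fin d → Bool)
  | _, .leaf _, _ => fun i => i.elim0
  | _, .node j th l r, z =>
      Fin.cons (decide (th < z j)) ((if z j ≤ th then l else r).evalPath z)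

/-- The list of `(feature, threshold, direction)` triples of the ancestors along a
root-to-leaf path (`direction = true` means the path goes right at that node). -/
def BTree.pathList {p : ℕ} :
    {d : ℕ} → BTree p d → (Fin d → Bool) → List (Fin p × ℝ × Bool)
  | _, .leaf _, _ => []
  | _, .node j th l r, path =>
      (j, th, path 0) :: (if path 0 then r else l).pathList (fun i => path i.succ)

lemma BTree.evalPath_eq_iff {p : ℕ} (z : Fin p → ℝ) :
    ∀ {d : ℕ} (t : BTree p d) (path : Fin d → Bool),
    t.evalPath z = path ↔
    ∀ e ∈ t.pathList path, if e.2.2 then e.2.1 < z e.1 else z e.1 ≤ e.2.1 := by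
  intro d t
  induction t with
  | leaf b =>
      intro path
      simp only [BTree.evalPath, BTree.pathList, List.not_mem_nil, false_implies, implies_true,
        iff_true]
      exact funext fun i => i.elim0
  | node j th l r ihl ihr =>
      intro path
      rw [BTree.evalPath, BTree.pathList, ← Fin.cons_self_tail path, Fin.cons_inj]
      simp only [Fin.cons_zero, List.mem_cons, forall_eq_or_imp]
      by_cases hc : th < z j
      · rw [if_neg (not_le.mpr hc)]
        by_cases hp : path 0 = true
        · rw [show Fin.tail path = fun i => path i.succ from rfl]
          simp [hp, hc, ihr]
        · simp only [Bool.not_eq_true] at hp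
          simp [hp, hc, not_le.mpr hc]
      · rw [if_pos (not_lt.mp hc)]
        by_cases hp : path 0 = true
        · simp [hp, hc]
        · simp only [Bool.not_eq_true] at hp
          rw [show Fin.tail path = fun i => path i.succ from rfl]
          simp [hp, hc, not_lt.mp hc, ihl]

/-- If the split features along the path to leaf `t` are pairwise distinct,
then some point of the box `S = ∏ j [x j - Δl j, x j + Δr j]` reaches the leaf iff each
per-node one-sided reachability condition holds: `x jₘ - Δl jₘ ≤ bₘ` for every ancestor
from which the path goes left, and `x jₘ + Δr jₘ > bₘ` for every ancestor from which it
goes right. -/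
theorem box_reaches_leaf_iff {p d : ℕ} (t : BTree p d)
    (x Δl Δr : Fin p → ℝ) (hl : ∀ j, 0 ≤ Δl j) (hr : ∀ j, 0 ≤ Δr j)
    (path : Fin d → Bool)
    (hdistinct : ((t.pathList path).map (fun e => e.1)).Nodup) :
    (∃ z ∈ {z : Fin p → ℝ | ∀ j, x j - Δl j ≤ z j ∧ z j ≤ x j + Δr j},
        t.evalPath z = path) ↔
    (∀ e ∈ t.pathList path,
        if e.2.2 then e.2.1 < x e.1 + Δr e.1 else x e.1 - Δl e.1 ≤ e.2.1) := by
  set L := t.pathList path with hL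
  constructor
  · rintro ⟨z, hz, heval⟩ e he
    have hc := (BTree.evalPath_eq_iff z t path).mp heval e he
    have hb := hz e.1
    split_ifs at hc ⊢ with h
    · linarith [hb.2]
    · linarith [hb.1]
  · intro h
    classical
    set z : Fin p → ℝ := fun j =>
      match L.find? (fun e => e.1 == j) with
      | some e => if e.2.2 then x j + Δr j else x j - Δl j
      | none => x j with hzdef
    refine ⟨z, ?_, ?_⟩
    · intro j
      show x j - Δl j ≤ z j ∧ z j ≤ x j + Δr j
      rw [hzdef]
      rcases hfind : L.find? (fun e => e.1 == j) with _ | e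
      · simp only [hfind]
        constructor <;> [linarith [hl j]; linarith [hr j]]
      · simp only [hfind]
        split_ifs
        · exact ⟨by linarith [hl j, hr j], le_rfl⟩
        · exact ⟨le_rfl, by linarith [hl j, hr j]⟩
    · rw [BTree.evalPath_eq_iff]
      intro e he
      have hsome : (L.find? (fun e' => e'.1 == e.1)).isSome := by
        rw [List.find?_isSome]
        exact ⟨e, he, by simp⟩
      obtain ⟨e', hfind⟩ := Option.isSome_iff_exists.mp hsome
      have he'mem := List.mem_of_find?_eq_some hfind
      have he'eq : e'.1 = e.1 := by
        have := List.find?_some hfind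
        simpa using this
      have : e' = e := List.inj_on_of_nodup_map hdistinct he'mem he he'eq
      subst this
      have hze : z e'.1 = if e'.2.2 then x e'.1 + Δr e'.1 else x e'.1 - Δl e'.1 := by
        rw [hzdef]; simp [hfind]
      have hcond := h e' he'mem
      rw [hze]
      split_ifs at hcond ⊢ with hd
      · exact hcond
      · exact hcond
end

section
/- If the conflict graph has maximum matching size m, then for every classifier C : X → Bool, card {i | ∃ z ∈ Sᵢ, C z ≠ yᵢ} ≥ m; i.e., at least m samples are adversarially misclassified by every classifier. -/
/-- Lower bound direction of the matching bound: for every classifier `C`,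
the number of adversarially misclassified samples is at least the size of any matching
of the conflict graph (in particular at least the maximum matching size `m`). -/
theorem every_classifier_misclassifies_matching_many
    {X : Type*} {I : Type*} [Fintype I]
    (y : I → Bool) (S : I → Set X) (hne : ∀ i, (S i).Nonempty)
    (M : Finset (I × I))
    (hedge : ∀ e ∈ M, y e.1 ≠ y e.2 ∧ (S e.1 ∩ S e.2).Nonempty)
    (hdisj : ∀ e ∈ M, ∀ f ∈ M, e ≠ f →
      e.1 ≠ f.1 ∧ e.1 ≠ f.2 ∧ e.2 ≠ f.1 ∧ e.2 ≠ f.2)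
    (C : X → Bool) :
    M.card ≤ Nat.card {i : I | ∃ z ∈ S i, C z ≠ y i} := by
  classical
  set P : I → Prop := fun i => ∃ z ∈ S i, C z ≠ y i with hP
  have hcard : Nat.card {i : I | P i} = (Finset.univ.filter P).card := by
    rw [Nat.card_eq_fintype_card, Fintype.card_subtype]
    simp [Set.mem_setOf_eq]
  rw [hcard]
  set g : I × I → I := fun e => if P e.1 then e.1 else e.2 with hg
  apply Finset.card_le_card_of_injOn g
  · intro e he
    by_cases h1 : P e.1
    · simpa [hg, h1] using h1
    · obtain ⟨hy, w, hw1, hw2⟩ := hedge e he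
      have hCw : C w = y e.1 := by
        by_contra hc
        exact h1 ⟨w, hw1, hc⟩
      have : P e.2 := ⟨w, hw2, by rw [hCw]; exact hy⟩
      simpa [hg, h1] using this
  · intro e he f hf hgef
    simp only [Finset.mem_coe] at he hf
    by_contra hne'
    obtain ⟨h11, h12, h21, h22⟩ := hdisj e he f hf hne'
    simp only [hg] at hgef
    split_ifs at hgef <;> simp_all
end
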